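/- arXiv:2205.15861 — 2 statements merged into one kernel-verified Lean document; each statement's English description precedes it below -/
import Mathlib

section
/- For an odd prime r, the partial derivative with respect to x of H(x,z) = z^{r-1}·x·h((x/z)^2 + 2) equals z^{r-1}·r·h(ix/z)·h(-ix/z), where i is a primitive fourth root of unity. -/
open Polynomial Finset Complex

/-!
Write `r = 2m + 1`, `P(u) = u h(u² + 2)` and `Q(u) = r h(iu) h(-iu)`. Then `H(x, z) = z^r P(x/z)`,
so it suffices to show `P' = Q`. Substitute `u = t - t⁻¹`, so that `u² + 2 = t² + t⁻²`. Pairing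
`ζ^j` with `ζ^(-j)` in `∏_{k<r} (y - ζ^k) = y^r - 1` gives `P(t - t⁻¹) = t^r - t^(-r)`. Since `ζ²`
is again a primitive `r`-th root of unity, the same pairing gives
`(t² + 1) t^(r-1) Q(t - t⁻¹) = r (t^(2r) + 1)`. Differentiating the first identity in `t` shows
that `P'` and `Q` agree at `t - t⁻¹` whenever `t² ≠ -1`, which covers every point of `ℂ` except `±2i`.
-/

theorem Finset.prod_range_two_mul_add_one {M : Type*} [CommMonoid M] (f : ℕ → M) (m : ℕ) :
    ∏ k ∈ range (2 * m + 1), f k = f 0 * ∏ j ∈ Icc 1 m, (f j * f (2 * m + 1 - j)) := by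
  have hreflect : ∏ j ∈ Icc 1 m, f (2 * m + 1 - j) = ∏ k ∈ Ico (m + 1) (2 * m + 1), f k := by
    rw [← Ico_add_one_right_eq_Icc, prod_Ico_reflect _ _ (by omega)]
    congr 2; omega
  rw [prod_mul_distrib, hreflect, ← Ico_add_one_right_eq_Icc,
    prod_Ico_consecutive _ (by omega : 1 ≤ m + 1) (by omega : m + 1 ≤ 2 * m + 1),
    ← prod_range_one f, prod_range_mul_prod_Ico _ (by omega : 1 ≤ 2 * m + 1)]

/-- The paper's `h` for `r = 2m + 1`. -/
noncomputable def hPoly {K : Type*} [Field K] (ζ : K) (m : ℕ) : K[X] :=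
  ∏ j ∈ Icc 1 m, (X - C (ζ ^ j + ζ⁻¹ ^ j))

section Field

variable {K : Type*} [Field K] {ζ : K} {m : ℕ}

@[simp]
theorem eval_hPoly (y : K) : eval y (hPoly ζ m) = ∏ j ∈ Icc 1 m, (y - (ζ ^ j + ζ⁻¹ ^ j)) := by
  simp [hPoly, eval_prod]

theorem IsPrimitiveRoot.sub_one_mul_prod_Icc_pairs (hζ : IsPrimitiveRoot ζ (2 * m + 1)) (y : K) :
    (y - 1) * ∏ j ∈ Icc 1 m, ((y - ζ ^ j) * (y - ζ⁻¹ ^ j)) = y ^ (2 * m + 1) - 1 := by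
  have hroots := congrArg (eval y) (X_pow_sub_C_eq_prod hζ (2 * m).succ_pos (one_pow _))
  simp only [eval_sub, eval_pow, eval_X, eval_C, eval_prod, mul_one] at hroots
  rw [hroots, prod_range_two_mul_add_one, pow_zero]
  refine congrArg _ (prod_congr rfl fun j hj => ?_)
  rw [inv_pow, pow_sub₀ _ (hζ.ne_zero (by omega)) (by simp at hj; omega), hζ.pow_eq_one, one_mul]

theorem IsPrimitiveRoot.sub_one_mul_pow_mul_eval_add_inv_hPoly
    (hζ : IsPrimitiveRoot ζ (2 * m + 1)) {y : K} (hy : y ≠ 0) :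
    (y - 1) * y ^ m * eval (y + y⁻¹) (hPoly ζ m) = y ^ (2 * m + 1) - 1 := by
  have hζ0 : ζ ≠ 0 := hζ.ne_zero (by omega)
  have hfactor (j : ℕ) : (y + y⁻¹ - (ζ ^ j + ζ⁻¹ ^ j)) * y = (y - ζ ^ j) * (y - ζ⁻¹ ^ j) := by
    rw [inv_pow]
    field_simp
    ring
  calc (y - 1) * y ^ m * eval (y + y⁻¹) (hPoly ζ m)
      = (y - 1) * ((∏ j ∈ Icc 1 m, (y + y⁻¹ - (ζ ^ j + ζ⁻¹ ^ j))) * y ^ #(Icc 1 m)) := by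
        rw [eval_hPoly, Nat.card_Icc, Nat.add_sub_cancel]
        ring
    _ = y ^ (2 * m + 1) - 1 := by
        rw [prod_mul_pow_card]
        simp_rw [hfactor]
        exact hζ.sub_one_mul_prod_Icc_pairs y

theorem IsPrimitiveRoot.eval_sub_inv_X_mul_hPoly_comp (hζ : IsPrimitiveRoot ζ (2 * m + 1))
    {t : K} (ht : t ≠ 0) :
    eval (t - t⁻¹) (X * (hPoly ζ m).comp (X ^ 2 + 2)) = t ^ (2 * m + 1) - t⁻¹ ^ (2 * m + 1) := by
  have h := hζ.sub_one_mul_pow_mul_eval_add_inv_hPoly (pow_ne_zero 2 ht)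
  have hsq : (t - t⁻¹) ^ 2 + 2 = t ^ 2 + (t ^ 2)⁻¹ := by
    field_simp
    ring
  simp only [eval_mul, eval_X, eval_comp, eval_add, eval_pow, eval_ofNat, hsq]
  generalize eval (t ^ 2 + (t ^ 2)⁻¹) (hPoly ζ m) = E at h ⊢
  rw [← pow_mul, ← pow_mul] at h
  rw [inv_pow]
  field_simp
  linear_combination t * h

/-- `(iu - ω)(-iu - ω) = u² + ω²` and `ω_j(ζ)² = ω_j(ζ²) + 2`, so this is the previous identity for
the primitive root `ζ²` at `y = -t²`. -/
theorem IsPrimitiveRoot.eval_mul_eval_neg_hPoly (hζ : IsPrimitiveRoot ζ (2 * m + 1)) {i : K}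
    (hi : i ^ 2 = -1) {t : K} (ht : t ≠ 0) :
    (t ^ 2 + 1) * t ^ (2 * m) *
        (eval (i * (t - t⁻¹)) (hPoly ζ m) * eval (-i * (t - t⁻¹)) (hPoly ζ m)) =
      t ^ (2 * (2 * m + 1)) + 1 := by
  have hζ2 : IsPrimitiveRoot (ζ ^ 2) (2 * m + 1) :=
    hζ.pow_of_coprime 2 (Nat.coprime_two_left.2 (odd_two_mul_add_one m))
  have h := hζ2.sub_one_mul_pow_mul_eval_add_inv_hPoly (neg_ne_zero.2 (pow_ne_zero 2 ht))
  have hfactor (a : K) (ha : a ≠ 0) :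
      (i * (t - t⁻¹) - (a + a⁻¹)) * (-i * (t - t⁻¹) - (a + a⁻¹)) =
        -(-t ^ 2 + (-t ^ 2)⁻¹ - (a ^ 2 + (a ^ 2)⁻¹)) := by
    field_simp
    linear_combination (-(a ^ 2 * (t ^ 2 - 1) ^ 2)) * hi
  simp only [eval_hPoly, inv_pow, pow_right_comm ζ 2] at h ⊢
  simp only [← prod_mul_distrib, hfactor _ (pow_ne_zero _ (hζ.ne_zero (by omega))), prod_neg,
    Nat.card_Icc, Nat.add_sub_cancel]
  generalize ∏ j ∈ Icc 1 m, (-t ^ 2 + (-t ^ 2)⁻¹ - ((ζ ^ j) ^ 2 + ((ζ ^ j) ^ 2)⁻¹)) = E at h ⊢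
  rw [neg_pow (t ^ 2), Odd.neg_pow (odd_two_mul_add_one m), ← pow_mul, ← pow_mul] at h
  linear_combination -h

end Field

theorem exists_ne_zero_sub_inv_eq (u : ℂ) : ∃ t ≠ 0, t - t⁻¹ = u := by
  obtain ⟨s, hs⟩ := IsAlgClosed.exists_pow_nat_eq (u ^ 2 + 4) two_pos
  have hprod : (u + s) / 2 * ((s - u) / 2) = 1 := by linear_combination hs / 4
  refine ⟨(u + s) / 2, left_ne_zero_of_mul_eq_one hprod, ?_⟩
  rw [inv_eq_of_mul_eq_one_right hprod]
  ring

section Complex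

open Filter Topology

variable {ζ : ℂ} {m : ℕ}

theorem IsPrimitiveRoot.eval_sub_inv_derivative_X_mul_hPoly_comp
    (hζ : IsPrimitiveRoot ζ (2 * m + 1)) {t : ℂ} (ht : t ≠ 0) (ht' : t ^ 2 + 1 ≠ 0) :
    eval (t - t⁻¹) (derivative (X * (hPoly ζ m).comp (X ^ 2 + 2))) =
      (2 * m + 1 : ℂ) * (eval (I * (t - t⁻¹)) (hPoly ζ m) * eval (-I * (t - t⁻¹)) (hPoly ζ m)) := by
  set P := X * (hPoly ζ m).comp (X ^ 2 + 2)
  have hchain : HasDerivAt (fun s => eval (s - s⁻¹) P)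
      (eval (t - t⁻¹) (derivative P) * (1 - -(t ^ 2)⁻¹)) t :=
    (P.hasDerivAt _).comp t ((hasDerivAt_id t).sub (hasDerivAt_inv ht))
  have heq : (fun s => s ^ (2 * m + 1) - s⁻¹ ^ (2 * m + 1)) =ᶠ[𝓝 t] fun s => eval (s - s⁻¹) P := by
    filter_upwards [eventually_ne_nhds ht] with s hs
    exact (hζ.eval_sub_inv_X_mul_hPoly_comp hs).symm
  have hpow := ((hasDerivAt_pow (2 * m + 1) t).sub
    ((hasDerivAt_inv ht).pow (2 * m + 1))).congr_of_eventuallyEq heq.symm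
  rw [Nat.add_sub_cancel, inv_pow] at hpow
  have hD := hchain.unique hpow
  have hE := hζ.eval_mul_eval_neg_hPoly I_sq ht
  generalize eval (t - t⁻¹) (derivative P) = D at hD ⊢
  generalize eval (I * (t - t⁻¹)) (hPoly ζ m) * eval (-I * (t - t⁻¹)) (hPoly ζ m) = E at hE ⊢
  field_simp at hD
  push_cast at hD
  apply mul_left_cancel₀ (mul_ne_zero ht' (pow_ne_zero (2 * m) ht))
  linear_combination hD - (2 * m + 1 : ℂ) * hE

theorem IsPrimitiveRoot.derivative_X_mul_hPoly_comp (hζ : IsPrimitiveRoot ζ (2 * m + 1)) :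
    derivative (X * (hPoly ζ m).comp (X ^ 2 + 2)) =
      C (2 * m + 1 : ℂ) * ((hPoly ζ m).comp (C I * X) * (hPoly ζ m).comp (-C I * X)) := by
  refine eq_of_infinite_eval_eq _ _
    (Set.Infinite.mono ?_ (Set.toFinite {2 * I, -2 * I}).infinite_compl)
  intro u hu
  obtain ⟨t, ht, rfl⟩ := exists_ne_zero_sub_inv_eq u
  have ht' : t ^ 2 + 1 ≠ 0 := by
    intro h0
    apply hu
    rw [Set.mem_insert_iff, Set.mem_singleton_iff,
      inv_eq_of_mul_eq_one_right (show t * -t = 1 by linear_combination -h0)]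
    rcases sq_eq_sq_iff_eq_or_eq_neg.1 (show t ^ 2 = I ^ 2 by linear_combination h0 - I_sq) with
      rfl | rfl
    · exact Or.inl (by ring)
    · exact Or.inr (by ring)
  simp only [eval_mul, eval_C, eval_comp, eval_X, eval_neg]
  exact hζ.eval_sub_inv_derivative_X_mul_hPoly_comp ht ht'

end Complex

theorem deriv_H_eq_general (r : ℕ) (hodd : Odd r)
    (ζ : ℂ) (hζ : IsPrimitiveRoot ζ r) (z : ℂ) (hz : z ≠ 0) (x : ℂ) :
    deriv (fun x : ℂ => z ^ (r - 1) * x *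
        ∏ j ∈ Finset.Icc 1 ((r - 1) / 2), ((x / z) ^ 2 + 2 - (ζ ^ j + ζ⁻¹ ^ j))) x =
      z ^ (r - 1) * r *
        (∏ j ∈ Finset.Icc 1 ((r - 1) / 2), (Complex.I * x / z - (ζ ^ j + ζ⁻¹ ^ j))) *
        (∏ j ∈ Finset.Icc 1 ((r - 1) / 2), (-Complex.I * x / z - (ζ ^ j + ζ⁻¹ ^ j))) := by
  obtain ⟨m, rfl⟩ := hodd
  rw [Nat.add_sub_cancel, Nat.mul_div_cancel_left m two_pos]
  set P := X * (hPoly ζ m).comp (X ^ 2 + 2)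
  have hH : (fun x : ℂ => z ^ (2 * m) * x *
      ∏ j ∈ Icc 1 m, ((x / z) ^ 2 + 2 - (ζ ^ j + ζ⁻¹ ^ j))) =
      fun x => z ^ (2 * m + 1) * eval (x / z) P := by
    funext y
    simp only [P, eval_mul, eval_X, eval_comp, eval_add, eval_pow, eval_ofNat, eval_hPoly]
    field_simp
    ring
  have hderiv : HasDerivAt (fun x => z ^ (2 * m + 1) * eval (x / z) P)
      (z ^ (2 * m + 1) * (eval (x / z) (derivative P) * (1 / z))) x :=
    ((P.hasDerivAt _).comp x ((hasDerivAt_id' x).div_const z)).const_mul _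
  rw [hH, hderiv.deriv, hζ.derivative_X_mul_hPoly_comp]
  simp only [eval_mul, eval_C, eval_comp, eval_X, eval_neg, eval_hPoly]
  push_cast
  field_simp
  ring

/-- For an odd prime `r`, the derivative with respect to `x` of
`H(x,z) = z^(r-1)·x·h((x/z)² + 2)` equals `z^(r-1)·r·h(ix/z)·h(-ix/z)`, where
`h(x) = ∏_{j=1}^{(r-1)/2} (x - ω_j)`, `ω_j = ζ_r^j + ζ_r^{-j}`, and `i² = -1`. -/
theorem deriv_H_eq (r : ℕ) (hr : r.Prime) (hodd : Odd r)
    (ζ : ℂ) (hζ : IsPrimitiveRoot ζ r) (z : ℂ) (hz : z ≠ 0) (x : ℂ) :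
    deriv (fun x : ℂ => z ^ (r - 1) * x *
        ∏ j ∈ Finset.Icc 1 ((r - 1) / 2), ((x / z) ^ 2 + 2 - (ζ ^ j + ζ⁻¹ ^ j))) x =
      z ^ (r - 1) * r *
        (∏ j ∈ Finset.Icc 1 ((r - 1) / 2), (Complex.I * x / z - (ζ ^ j + ζ⁻¹ ^ j))) *
        (∏ j ∈ Finset.Icc 1 ((r - 1) / 2), (-Complex.I * x / z - (ζ ^ j + ζ⁻¹ ^ j))) :=
  deriv_H_eq_general r hodd ζ hζ z hz x
end

section
/- For an odd prime r and coprime integers a, b, one has H(a - b) = a^r - b^r, where H(x) = \sum_{k=0}^{(r-1)/2} c_k (ab)^k x^{r-2k} with c_k = (r/(r-k))·C(r-k, k). -/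
/-!
With `q = -xy` and `d = x + y`, the power sums `s n = x ^ n + y ^ n` satisfy
`s (n + 2) = d * s (n + 1) + q * s n`. The sums `∑ₖ (n/(n-k)) C(n-k,k) q^k d^(n-2k)` satisfy the
same recurrence, because their coefficients obey the Pascal-type rule
`c (n+2) (k+1) = c (n+1) (k+1) + c n k`, and they agree with `s` at `n = 1, 2`.
Taking `x = a`, `y = -b` and `r` odd gives `H(a - b) = a ^ r - b ^ r`.
-/

open Finset

/-- The coefficient `c_k` of `H`, with `r` replaced by `n`. Division by zero makes
`lucasCoeff 0 0 = 0` rather than `1`. -/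
def lucasCoeff (n k : ℕ) : ℚ := n / (n - k : ℚ) * (n - k).choose k

lemma lucasCoeff_zero {n : ℕ} (hn : n ≠ 0) : lucasCoeff n 0 = 1 := by
  simp [lucasCoeff, hn]

lemma lucasCoeff_eq_zero_of_lt {n k : ℕ} (h : n < 2 * k) : lucasCoeff n k = 0 := by
  simp [lucasCoeff, Nat.choose_eq_zero_of_lt (by omega : n - k < k)]

lemma lucasCoeff_add_two {n : ℕ} (hn : n ≠ 0) (k : ℕ) :
    lucasCoeff (n + 2) (k + 1) = lucasCoeff (n + 1) (k + 1) + lucasCoeff n k := by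
  rcases lt_or_ge n (2 * k) with h | h
  · simp only [lucasCoeff_eq_zero_of_lt (by omega : n < 2 * k),
      lucasCoeff_eq_zero_of_lt (by omega : n + 2 < 2 * (k + 1)),
      lucasCoeff_eq_zero_of_lt (by omega : n + 1 < 2 * (k + 1)), add_zero]
  obtain ⟨m, rfl⟩ := Nat.exists_eq_add_of_le' (by omega : k ≤ n)
  have hm : (m : ℚ) ≠ 0 := by norm_cast; omega
  have hk : (k : ℚ) + 1 ≠ 0 := by positivity
  have hsucc : ((m + 1).choose (k + 1) : ℚ) = (m + 1) * m.choose k / (k + 1) := by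
    rw [eq_div_iff hk]
    exact_mod_cast (Nat.add_one_mul_choose_eq m k).symm
  have hright : (m.choose (k + 1) : ℚ) = m.choose k * (m - k) / (k + 1) := by
    rw [eq_div_iff hk]
    have := congrArg (Nat.cast : ℕ → ℚ) (Nat.choose_succ_right_eq m k)
    push_cast [Nat.cast_sub (by omega : k ≤ m)] at this
    exact this
  simp only [lucasCoeff, Nat.add_sub_cancel, show m + k + 2 - (k + 1) = m + 1 by omega,
    show m + k + 1 - (k + 1) = m by omega, hsucc, hright]
  push_cast
  rw [show (m + k + 2 : ℚ) - (k + 1) = m + 1 by ring, show (m + k + 1 : ℚ) - (k + 1) = m by ring,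
    add_sub_cancel_right]
  field_simp
  ring

def lucasTerm (q d : ℚ) (n k : ℕ) : ℚ := lucasCoeff n k * q ^ k * d ^ (n - 2 * k)

def lucasSum (q d : ℚ) (n N : ℕ) : ℚ := ∑ k ∈ range N, lucasTerm q d n k

section

variable (q d : ℚ)

lemma lucasTerm_eq_zero_of_lt {n k : ℕ} (h : n < 2 * k) : lucasTerm q d n k = 0 := by
  simp [lucasTerm, lucasCoeff_eq_zero_of_lt h]

lemma lucasTerm_add_two_zero (n : ℕ) : lucasTerm q d (n + 2) 0 = d * lucasTerm q d (n + 1) 0 := by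
  simp only [lucasTerm, Nat.mul_zero, Nat.sub_zero, lucasCoeff_zero (Nat.succ_ne_zero _), pow_succ]
  ring

lemma lucasTerm_add_two {n : ℕ} (hn : n ≠ 0) (k : ℕ) :
    lucasTerm q d (n + 2) (k + 1) = d * lucasTerm q d (n + 1) (k + 1) + q * lucasTerm q d n k := by
  rcases lt_or_ge (n + 1) (2 * (k + 1)) with h | h
  · rw [lucasTerm_eq_zero_of_lt q d h]
    simp only [lucasTerm, lucasCoeff_add_two hn, lucasCoeff_eq_zero_of_lt h,
      show n + 2 - 2 * (k + 1) = n - 2 * k by omega]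
    ring
  · simp only [lucasTerm, lucasCoeff_add_two hn, show n + 2 - 2 * (k + 1) = n - 2 * k by omega,
      show n - 2 * k = n + 1 - 2 * (k + 1) + 1 by omega]
    ring

lemma lucasSum_add_two {n : ℕ} (hn : n ≠ 0) (N : ℕ) :
    lucasSum q d (n + 2) (N + 1) = d * lucasSum q d (n + 1) (N + 1) + q * lucasSum q d n N := by
  simp only [lucasSum, sum_range_succ', lucasTerm_add_two q d hn, lucasTerm_add_two_zero,
    sum_add_distrib, mul_sum, mul_add]
  ring

lemma lucasSum_eq_of_half_lt {n N : ℕ} (hN : n / 2 < N) :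
    lucasSum q d n N = lucasSum q d n (n / 2 + 1) :=
  (sum_subset (range_subset_range.mpr hN) fun k _ hk =>
    lucasTerm_eq_zero_of_lt q d (by simp at hk; omega)).symm

end

theorem lucasSum_neg_mul_add (x y : ℚ) :
    ∀ {n N : ℕ}, n ≠ 0 → n / 2 < N → lucasSum (-(x * y)) (x + y) n N = x ^ n + y ^ n
  | 1, N, _, hN => by
    rw [lucasSum_eq_of_half_lt _ _ hN]
    simp [lucasSum, lucasTerm, lucasCoeff]
  | 2, N, _, hN => by
    rw [lucasSum_eq_of_half_lt _ _ hN]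
    norm_num [lucasSum, lucasTerm, lucasCoeff, sum_range_succ]
    ring
  | n + 3, N, _, hN => by
    rw [lucasSum_eq_of_half_lt _ _ hN, lucasSum_add_two _ _ (by omega : n + 1 ≠ 0),
      lucasSum_neg_mul_add x y (by omega) (by omega),
      lucasSum_neg_mul_add x y (by omega) (by omega)]
    ring

theorem H_at_a_sub_b_general (r : ℕ) (hodd : Odd r)
    (a b : ℤ) :
    ∑ k ∈ Finset.range ((r - 1) / 2 + 1),
        ((r : ℚ) / ((r : ℚ) - (k : ℚ))) * ((r - k).choose k : ℚ) *
          ((a * b : ℤ) : ℚ) ^ k * ((a - b : ℤ) : ℚ) ^ (r - 2 * k) =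
      (a : ℚ) ^ r - (b : ℚ) ^ r := by
  have hq : ((a * b : ℤ) : ℚ) = -(a * -b) := by push_cast; ring
  have hd : ((a - b : ℤ) : ℚ) = a + -b := by push_cast; ring
  rw [hq, hd]
  change lucasSum _ _ r _ = _
  have hhalf : r / 2 < (r - 1) / 2 + 1 := by have := Nat.odd_iff.mp hodd; omega
  rw [lucasSum_neg_mul_add a (-b) hodd.pos.ne' hhalf, hodd.neg_pow, sub_eq_add_neg]

/-- For an odd prime `r` and coprime integers `a, b`, one has `H(a - b) = a^r - b^r`, where
`H(x) = ∑_{k=0}^{(r-1)/2} c_k (ab)^k x^(r-2k)` with `c_k = (r/(r-k))·C(r-k,k)`. -/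
theorem H_at_a_sub_b (r : ℕ) (hr : r.Prime) (hodd : Odd r)
    (a b : ℤ) (hab : IsCoprime a b) :
    ∑ k ∈ Finset.range ((r - 1) / 2 + 1),
        ((r : ℚ) / ((r : ℚ) - (k : ℚ))) * ((r - k).choose k : ℚ) *
          ((a * b : ℤ) : ℚ) ^ k * ((a - b : ℤ) : ℚ) ^ (r - 2 * k) =
      (a : ℚ) ^ r - (b : ℚ) ^ r :=
  H_at_a_sub_b_general r hodd a b
end
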